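/- Let t ≥ 3, let C_{tk} be the cycle on tk vertices (tk ≥ 3), and let c be a coloring with t types where each color class has size exactly k. If c is an equilibrium under the difference-seeking utility U_#, then sw(c, U_#) ≥ 2(t−1)k. -/

import Mathlib

open SimpleGraph Finset

/-- The coloring obtained from `c` by swapping the colors (agents) at `u` and `v`. -/
def swapColoring {V : Type*} [DecidableEq V] {t : ℕ} (c : V → Fin t) (u v : V) : V → Fin t :=
  fun w => if w = u then c v else if w = v then c u else c w

/-- The binary utility `U_b`: 1 if some neighbor has a different type, 0 otherwise. -/
def Ub {V : Type*} [Fintype V] (G : SimpleGraph V) [DecidableRel G.Adj]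
    {t : ℕ} (c : V → Fin t) (v : V) : ℕ :=
  if ∃ w ∈ G.neighborFinset v, c w ≠ c v then 1 else 0

/-- The difference-seeking utility `U_#`: the number of neighbors of a different type. -/
def Usharp {V : Type*} [Fintype V] (G : SimpleGraph V) [DecidableRel G.Adj]
    {t : ℕ} (c : V → Fin t) (v : V) : ℕ :=
  ((G.neighborFinset v).filter fun w => c w ≠ c v).card

/-- `T_c(v)`: the set of types present in the neighborhood of `v`. -/
def typesIn {V : Type*} [Fintype V] (G : SimpleGraph V) [DecidableRel G.Adj]
    {t : ℕ} (c : V → Fin t) (v : V) : Finset (Fin t) :=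
  (G.neighborFinset v).image c

/-- The variety-seeking utility `U_τ`: the number of types other than `c v` in the
neighborhood of `v`. -/
def Utau {V : Type*} [Fintype V] (G : SimpleGraph V) [DecidableRel G.Adj]
    {t : ℕ} (c : V → Fin t) (v : V) : ℕ :=
  ((typesIn G c v).erase (c v)).card

/-- The swap of `u` and `v` is improving under utility `U`. -/
def ImprovingSwap {V : Type*} [DecidableEq V] {t : ℕ}
    (U : (V → Fin t) → V → ℕ) (c : V → Fin t) (u v : V) : Prop :=
  U c u < U (swapColoring c u v) v ∧ U c v < U (swapColoring c u v) u

/-- `c` is an equilibrium under the utility `U`: no improving swap exists. -/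
def Equilibrium {V : Type*} [DecidableEq V] {t : ℕ}
    (U : (V → Fin t) → V → ℕ) (c : V → Fin t) : Prop :=
  ∀ u v : V, c u ≠ c v → ¬ ImprovingSwap U c u v

/-- The number of monochromatic edges of `c`. -/
def monoCount {V : Type*} [Fintype V] [DecidableEq V] (G : SimpleGraph V) [DecidableRel G.Adj]
    {t : ℕ} (c : V → Fin t) : ℕ :=
  (G.edgeFinset.filter fun e => (e.map c).IsDiag).card

/-- The number of colorful edges of `c`. -/
def ceCount {V : Type*} [Fintype V] [DecidableEq V] (G : SimpleGraph V) [DecidableRel G.Adj]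
    {t : ℕ} (c : V → Fin t) : ℕ :=
  (G.edgeFinset.filter fun e => ¬ (e.map c).IsDiag).card

/-- The cycle graph on `ZMod n`: `i` adjacent to `i + 1` and `i - 1`. -/
def cycleZMod (n : ℕ) : SimpleGraph (ZMod n) := SimpleGraph.circulantGraph {1}

instance (n : ℕ) : DecidableRel (cycleZMod n).Adj := fun a b =>
  decidable_of_iff (a ≠ b ∧ (a - b = 1 ∨ b - a = 1)) (by simp [cycleZMod])

instance {α β : Type*} (G : SimpleGraph α) (H : SimpleGraph β)
    [DecidableRel G.Adj] [DecidableRel H.Adj] [DecidableEq α] [DecidableEq β] :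
    DecidableRel (G □ H).Adj := fun x y =>
  decidable_of_iff (G.Adj x.1 y.1 ∧ x.2 = y.2 ∨ H.Adj x.2 y.2 ∧ x.1 = y.1)
    (SimpleGraph.boxProd_adj).symm

/-!
Let `M` be the number of monochromatic edges `{v, v + 1}`. Then `sw(c) = 2 (tk - M)`, so it
suffices to show `M ≤ k`. A swap of agents of types `x ≠ y` is improving as soon as each of
them has fewer differently typed neighbors than the other's position would offer it.

If some vertex `u` has both neighbors of its own type, swapping `u` with an endpoint of a
monochromatic edge of another type is improving; so all monochromatic edges lie in the class of
`c u` and `M ≤ k`. Otherwise the monochromatic edges are isolated dominoes. For dominoes of types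
`x ≠ y`, swapping suitable endpoints shows that one of them is flanked on both sides by the
other's type. This orients every pair of domino types, and each type is flanked by only one type,
so at most three types carry dominoes. With at most two, `M ≤ k` since the `x`-class contains the
`2 M_x` cells of the `x`-dominoes. With three, the orientation is a cycle `x → y → z → x`; the
`y`-class contains the cells of the `y`-dominoes and the left flanks of the `x`-dominoes, so
`M_x + 2 M_y ≤ k`, and summing over the cycle gives `M ≤ k`.
-/

section swap

variable {V : Type*} [DecidableEq V] {t : ℕ}

lemma swapColoring_comm (c : V → Fin t) (u v : V) : swapColoring c u v = swapColoring c v u := by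
  funext w
  by_cases hu : w = u <;> by_cases hv : w = v <;> simp_all [swapColoring]

lemma swapColoring_apply_right (c : V → Fin t) (u v : V) : swapColoring c u v v = c u := by
  by_cases h : v = u <;> simp [swapColoring, h]

lemma swapColoring_apply_of_ne (c : V → Fin t) {u v w : V} (hu : w ≠ u) (hv : w ≠ v) :
    swapColoring c u v w = c w := by
  simp [swapColoring, hu, hv]

end swap

section graph

variable {V : Type*} [Fintype V] (G : SimpleGraph V) [DecidableRel G.Adj] {t : ℕ}
  (c : V → Fin t)

/-- The utility an agent of type `x` would have at `v`, the other agents staying put. -/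
def diffCount (v : V) (x : Fin t) : ℕ :=
  #{w ∈ G.neighborFinset v | c w ≠ x}

lemma usharp_eq_diffCount (v : V) : Usharp G c v = diffCount G c v (c v) := rfl

lemma diffCount_le_usharp_swapColoring [DecidableEq V] (u v : V) :
    diffCount G c v (c u) ≤ Usharp G (swapColoring c u v) v := by
  refine card_le_card fun w hw => ?_
  simp only [mem_filter, mem_neighborFinset] at hw ⊢
  obtain ⟨hadj, hne⟩ := hw
  refine ⟨hadj, ?_⟩
  rwa [swapColoring_apply_right,
    swapColoring_apply_of_ne c (by rintro rfl; exact hne rfl) (G.ne_of_adj hadj).symm]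

variable {G c}

lemma Equilibrium.diffCount_le_or [DecidableEq V] {u v : V} (heq : Equilibrium (Usharp G) c)
    (huv : c u ≠ c v) :
    diffCount G c v (c u) ≤ Usharp G c u ∨ diffCount G c u (c v) ≤ Usharp G c v := by
  by_contra! h
  refine heq u v huv ⟨h.1.trans_le (diffCount_le_usharp_swapColoring G c u v), ?_⟩
  rw [swapColoring_comm]
  exact h.2.trans_le (diffCount_le_usharp_swapColoring G c v u)

end graph

lemma ZMod.one_ne_zero_of_one_lt {n : ℕ} (hn : 1 < n) : (1 : ZMod n) ≠ 0 := by
  have : Fact (1 < n) := ⟨hn⟩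
  exact one_ne_zero

lemma ZMod.two_ne_zero_of_two_lt {n : ℕ} (hn : 2 < n) : (2 : ZMod n) ≠ 0 := by
  intro h
  have h2 : ((2 : ℕ) : ZMod n) = 0 := by exact_mod_cast h
  rw [ZMod.natCast_eq_zero_iff] at h2
  have := Nat.le_of_dvd (by norm_num) h2
  omega

section cycle

variable {n t : ℕ} [NeZero n]

lemma cycleZMod_neighborFinset (hn : 3 ≤ n) (v : ZMod n) :
    (cycleZMod n).neighborFinset v = {v + 1, v - 1} := by
  have h1 := ZMod.one_ne_zero_of_one_lt (n := n) (by omega)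
  ext w
  rw [mem_neighborFinset]
  simp only [cycleZMod, circulantGraph, fromRel_adj, Set.mem_singleton_iff,
    mem_insert, mem_singleton]
  constructor
  · rintro ⟨-, h | h⟩
    · right; linear_combination -h
    · left; linear_combination h
  · rintro (rfl | rfl)
    · exact ⟨fun h => h1 (by linear_combination -h), Or.inr (by ring)⟩
    · exact ⟨fun h => h1 (by linear_combination h), Or.inl (by ring)⟩

lemma diffCount_cycleZMod (hn : 3 ≤ n) (c : ZMod n → Fin t) (v : ZMod n) (x : Fin t) :
    diffCount (cycleZMod n) c v x =
      (if c (v + 1) = x then 0 else 1) + (if c (v - 1) = x then 0 else 1) := by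
  have hne : v + 1 ≠ v - 1 := fun h =>
    ZMod.two_ne_zero_of_two_lt hn (by linear_combination h)
  rw [diffCount, cycleZMod_neighborFinset hn, filter_insert, filter_singleton]
  by_cases h1 : c (v + 1) = x <;> by_cases h2 : c (v - 1) = x <;> simp [h1, h2, hne]

variable (n) in
def monoStarts (c : ZMod n → Fin t) : Finset (ZMod n) := {v | c (v + 1) = c v}

lemma sum_usharp_cycleZMod (hn : 3 ≤ n) (c : ZMod n → Fin t) :
    ∑ v, Usharp (cycleZMod n) c v = 2 * (n - #(monoStarts n c)) := by
  simp only [usharp_eq_diffCount, diffCount_cycleZMod hn, sum_add_distrib]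
  have hshift : ∑ v : ZMod n, (if c (v - 1) = c v then 0 else 1) =
      ∑ v : ZMod n, (if c (v + 1) = c v then 0 else 1) :=
    Fintype.sum_equiv (Equiv.subRight 1) _ _ fun v => by
      simp only [Equiv.subRight_apply, sub_add_cancel, eq_comm]
  have hcount : ∑ v : ZMod n, (if c (v + 1) = c v then 0 else 1) = n - #(monoStarts n c) := by
    have := card_filter_add_card_filter_not (s := univ) fun v : ZMod n => c (v + 1) = c v
    rw [card_univ, ZMod.card] at this
    rw [sum_ite, sum_const_zero, sum_const, smul_eq_mul, mul_one, zero_add]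
    exact Nat.eq_sub_of_add_eq' this
  rw [hshift, hcount, two_mul]

variable {c : ZMod n → Fin t}

lemma Equilibrium.eq_of_interior (hn : 3 ≤ n) (heq : Equilibrium (Usharp (cycleZMod n)) c)
    {u v : ZMod n} (hu : c (u - 1) = c u ∧ c (u + 1) = c u) (hv : c (v + 1) = c v) :
    c v = c u := by
  by_contra hvu
  have := heq.diffCount_le_or (Ne.symm hvu)
  simp only [usharp_eq_diffCount, diffCount_cycleZMod hn, hu.1, hu.2, hv] at this
  split_ifs at this <;> simp_all

lemma card_monoStarts_le_of_interior (hn : 3 ≤ n) (heq : Equilibrium (Usharp (cycleZMod n)) c)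
    {u : ZMod n} (hu : c (u - 1) = c u ∧ c (u + 1) = c u) :
    #(monoStarts n c) ≤ #{v | c v = c u} :=
  card_le_card fun v hv => by
    simp only [monoStarts, mem_filter, mem_univ, true_and] at hv ⊢
    exact heq.eq_of_interior hn hu hv

variable (c) in
abbrev monoStartsOf (x : Fin t) : Finset (ZMod n) := {v ∈ monoStarts n c | c v = x}

lemma monoStartsOf_union_image_add_one_subset (x : Fin t) :
    monoStartsOf c x ∪ (monoStartsOf c x).image (· + 1) ⊆ ({v | c v = x} : Finset (ZMod n)) := by
  intro w hw
  simp only [monoStarts, mem_union, mem_image, mem_filter, mem_univ, true_and] at hw ⊢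
  rcases hw with ⟨-, hw⟩ | ⟨v, ⟨hv, hvx⟩, rfl⟩
  · exact hw
  · exact hv.trans hvx

def FlankedBy (c : ZMod n → Fin t) (x y : Fin t) : Prop :=
  ∀ v, c (v + 1) = c v → c v = x → c (v - 1) = y ∧ c (v + 2) = y

omit [NeZero n] in
lemma FlankedBy.eq {y z : Fin t} {v : ZMod n} (hv : c (v + 1) = c v)
    (hy : FlankedBy c (c v) y) (hz : FlankedBy c (c v) z) : y = z :=
  (hy v hv rfl).1.symm.trans (hz v hv rfl).1

section noInterior

variable (hn : 3 ≤ n) (hiso : ∀ w : ZMod n, c (w - 1) = c w → c (w + 1) ≠ c w)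
include hiso

omit [NeZero n] in
lemma flank_ne_of_noInterior {v : ZMod n} (hv : c (v + 1) = c v) :
    c (v - 1) ≠ c v ∧ c (v + 2) ≠ c v := by
  refine ⟨fun h => hiso v h hv, fun h => hiso (v + 1) ?_ ?_⟩
  · rw [add_sub_cancel_right, hv]
  · rw [add_assoc, one_add_one_eq_two, h, hv]

include hn in
lemma exists_usharp_le_one_diffCount_eq_two {v : ZMod n} {y : Fin t} (hv : c (v + 1) = c v)
    (hvy : c v ≠ y) (hflank : c (v - 1) ≠ y ∨ c (v + 2) ≠ y) :
    ∃ p, c p = c v ∧ Usharp (cycleZMod n) c p ≤ 1 ∧ diffCount (cycleZMod n) c p y = 2 := by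
  have hne := flank_ne_of_noInterior hiso hv
  rcases hflank with h | h
  · refine ⟨v, rfl, ?_⟩
    simp [usharp_eq_diffCount, diffCount_cycleZMod hn, hv, hne.1, h, hvy]
  · have e : v + 1 + 1 = v + 2 := by ring
    refine ⟨v + 1, hv, ?_⟩
    simp [usharp_eq_diffCount, diffCount_cycleZMod hn, e, hv, hne.2, h, hvy]

include hn in
lemma Equilibrium.flanked_or_flanked (heq : Equilibrium (Usharp (cycleZMod n)) c)
    {v w : ZMod n} (hv : c (v + 1) = c v) (hw : c (w + 1) = c w) (hvw : c v ≠ c w) :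
    (c (v - 1) = c w ∧ c (v + 2) = c w) ∨ (c (w - 1) = c v ∧ c (w + 2) = c v) := by
  by_contra h
  rw [not_or] at h
  obtain ⟨p, hp, hp₁, hp₂⟩ := exists_usharp_le_one_diffCount_eq_two hn hiso hv hvw
    (not_and_or.1 h.1)
  obtain ⟨q, hq, hq₁, hq₂⟩ := exists_usharp_le_one_diffCount_eq_two hn hiso hw (Ne.symm hvw)
    (not_and_or.1 h.2)
  rw [← hp, ← hq] at hvw
  rw [← hq] at hp₂
  rw [← hp] at hq₂
  rcases heq.diffCount_le_or hvw with h | h <;> omega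

include hn in
lemma Equilibrium.flankedBy_or_flankedBy (heq : Equilibrium (Usharp (cycleZMod n)) c)
    {x y : Fin t} (hxy : x ≠ y) : FlankedBy c x y ∨ FlankedBy c y x := by
  by_contra! h
  obtain ⟨u, hu, rfl, hflank⟩ : ∃ u, c (u + 1) = c u ∧ c u = x ∧
      ¬(c (u - 1) = y ∧ c (u + 2) = y) := by
    simpa only [FlankedBy, not_forall, exists_prop] using h.1
  refine h.2 fun u' hu' hcu' => ?_
  subst hcu'
  exact (heq.flanked_or_flanked hn hiso hu hu' hxy).resolve_left hflank

include hn in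
lemma Equilibrium.flankedBy_cyclic (heq : Equilibrium (Usharp (cycleZMod n)) c)
    {v₀ v₁ v₂ : ZMod n} (h₀ : c (v₀ + 1) = c v₀) (h₁ : c (v₁ + 1) = c v₁)
    (h₂ : c (v₂ + 1) = c v₂) (h₀₁ : c v₀ ≠ c v₁) (h₀₂ : c v₀ ≠ c v₂) (h₁₂ : c v₁ ≠ c v₂) :
    (FlankedBy c (c v₀) (c v₁) ∧ FlankedBy c (c v₁) (c v₂) ∧ FlankedBy c (c v₂) (c v₀)) ∨
    (FlankedBy c (c v₀) (c v₂) ∧ FlankedBy c (c v₂) (c v₁) ∧ FlankedBy c (c v₁) (c v₀)) := by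
  have F := fun {x y : Fin t} => heq.flankedBy_or_flankedBy hn hiso (x := x) (y := y)
  rcases F h₀₁ with h01 | h10
  · have h20 := (F h₀₂).resolve_left fun h02 => h₁₂ (FlankedBy.eq h₀ h01 h02)
    have h12 := (F h₁₂).resolve_right fun h21 => h₀₁ (FlankedBy.eq h₂ h20 h21)
    exact Or.inl ⟨h01, h12, h20⟩
  · have h21 := (F h₁₂).resolve_left fun h12 => h₀₂ (FlankedBy.eq h₁ h10 h12)
    have h02 := (F h₀₂).resolve_right fun h20 => h₀₁ (FlankedBy.eq h₂ h20 h21)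
    exact Or.inr ⟨h02, h21, h10⟩

include hn in
lemma Equilibrium.mem_of_flankedBy_cyclic (heq : Equilibrium (Usharp (cycleZMod n)) c)
    {v₀ v₁ v₂ v : ZMod n} (h₀ : c (v₀ + 1) = c v₀) (h₁ : c (v₁ + 1) = c v₁)
    (h₂ : c (v₂ + 1) = c v₂) (h₀₁ : c v₀ ≠ c v₁) (h₀₂ : c v₀ ≠ c v₂) (h₁₂ : c v₁ ≠ c v₂)
    (hv : c (v + 1) = c v) : c v ∈ ({c v₀, c v₁, c v₂} : Finset (Fin t)) := by
  by_contra h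
  simp only [mem_insert, mem_singleton, not_or] at h
  obtain ⟨h₀₃, h₁₃, h₂₃⟩ := h
  rcases heq.flankedBy_cyclic hn hiso h₀ h₁ h₂ h₀₁ h₀₂ h₁₂ with ⟨P01, P12, -⟩ | ⟨P02, -, -⟩ <;>
    rcases heq.flankedBy_cyclic hn hiso h₀ h₁ hv h₀₁ (Ne.symm h₀₃) (Ne.symm h₁₃) with
      ⟨P01', P13, -⟩ | ⟨P03, -, -⟩
  · exact h₂₃ (FlankedBy.eq h₁ P12 P13).symm
  · exact h₁₃ (FlankedBy.eq h₀ P01 P03).symm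
  · exact h₁₂ (FlankedBy.eq h₀ P02 P01').symm
  · exact h₂₃ (FlankedBy.eq h₀ P02 P03).symm

lemma disjoint_monoStarts_image_add_one :
    Disjoint (monoStarts n c) ((monoStarts n c).image (· + 1)) := by
  refine disjoint_left.2 fun w hw hw' => ?_
  simp only [monoStarts, mem_image, mem_filter, mem_univ, true_and] at hw hw'
  obtain ⟨v, hv, rfl⟩ := hw'
  exact hiso (v + 1) (by rw [add_sub_cancel_right, hv]) hw

lemma card_monoStartsOf_union_image_add_one (x : Fin t) :
    #(monoStartsOf c x ∪ (monoStartsOf c x).image (· + 1)) = 2 * #(monoStartsOf c x) := by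
  rw [card_union_of_disjoint ((disjoint_monoStarts_image_add_one hiso).mono (filter_subset _ _)
    (image_subset_image (filter_subset _ _))), card_image_of_injective _ (add_left_injective 1),
    two_mul]

lemma two_mul_card_monoStartsOf_le (x : Fin t) :
    2 * #(monoStartsOf c x) ≤ #{v | c v = x} := by
  rw [← card_monoStartsOf_union_image_add_one hiso]
  exact card_le_card (monoStartsOf_union_image_add_one_subset x)

/-- The `y`-class contains the cells of the `y`-dominoes and the left flanks of the
`x`-dominoes; these are distinct since `y`-dominoes are flanked by `z ≠ x`. -/
lemma card_monoStartsOf_add_two_mul_le {x y z : Fin t} (hxy : x ≠ y) (hxz : x ≠ z)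
    (hFxy : FlankedBy c x y) (hFyz : FlankedBy c y z) :
    #(monoStartsOf c x) + 2 * #(monoStartsOf c y) ≤ #{v | c v = y} := by
  have hdisj : Disjoint (monoStartsOf c y ∪ (monoStartsOf c y).image (· + 1))
      ((monoStartsOf c x).image (· - 1)) := by
    refine disjoint_left.2 fun w hw hw' => ?_
    simp only [monoStarts, mem_union, mem_image, mem_filter, mem_univ, true_and] at hw hw'
    obtain ⟨v, ⟨hv, hvx⟩, rfl⟩ := hw'
    rcases hw with ⟨hw, hwy⟩ | ⟨u, ⟨hu, huy⟩, huv⟩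
    · rw [sub_add_cancel] at hw
      exact hxy (hvx.symm.trans (hw.trans hwy))
    · have : u + 2 = v := by linear_combination huv
      exact hxz (hvx.symm.trans (this ▸ (hFyz u hu huy).2))
  have hsub : (monoStartsOf c x).image (· - 1) ⊆ ({v | c v = y} : Finset (ZMod n)) := by
    intro w hw
    simp only [monoStarts, mem_image, mem_filter, mem_univ, true_and] at hw ⊢
    obtain ⟨v, ⟨hv, hvx⟩, rfl⟩ := hw
    exact (hFxy v hv hvx).1
  have := card_le_card (union_subset (monoStartsOf_union_image_add_one_subset y) hsub)
  rwa [card_union_of_disjoint hdisj, card_monoStartsOf_union_image_add_one hiso,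
    card_image_of_injective _ (sub_left_injective (b := (1 : ZMod n))), add_comm] at this

lemma card_monoStartsOf_add_add_le {k : ℕ} (hsize : ∀ x : Fin t, #{v | c v = x} = k)
    {x y z : Fin t} (hxy : x ≠ y) (hxz : x ≠ z) (hyz : y ≠ z)
    (hFxy : FlankedBy c x y) (hFyz : FlankedBy c y z) (hFzx : FlankedBy c z x) :
    #(monoStartsOf c x) + #(monoStartsOf c y) + #(monoStartsOf c z) ≤ k := by
  have := card_monoStartsOf_add_two_mul_le hiso hxy hxz hFxy hFyz
  have := card_monoStartsOf_add_two_mul_le hiso hyz hxy.symm hFyz hFzx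
  have := card_monoStartsOf_add_two_mul_le hiso hxz.symm hyz.symm hFzx hFxy
  simp only [hsize] at *
  omega

include hn in
lemma Equilibrium.card_monoStarts_le_of_noInterior (heq : Equilibrium (Usharp (cycleZMod n)) c)
    {k : ℕ} (hsize : ∀ x : Fin t, #{v | c v = x} = k) : #(monoStarts n c) ≤ k := by
  set S := (monoStarts n c).image c
  have hM : ∀ T, S ⊆ T → #(monoStarts n c) = ∑ x ∈ T, #(monoStartsOf c x) := fun T hT =>
    card_eq_sum_card_fiberwise fun v hv => hT (mem_image_of_mem c hv)
  rcases le_or_gt #S 2 with hS | hS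
  · have : ∑ x ∈ S, 2 * #(monoStartsOf c x) ≤ ∑ _x ∈ S, k :=
      sum_le_sum fun x _ => (two_mul_card_monoStartsOf_le hiso x).trans_eq (hsize x)
    rw [← mul_sum, ← hM S subset_rfl, sum_const, smul_eq_mul] at this
    have := Nat.mul_le_mul_right k hS
    omega
  · obtain ⟨_, _, _, h₀, h₁, h₂, h₀₁, h₀₂, h₁₂⟩ := two_lt_card_iff.1 hS
    obtain ⟨v₀, hv₀, rfl⟩ := mem_image.1 h₀
    obtain ⟨v₁, hv₁, rfl⟩ := mem_image.1 h₁
    obtain ⟨v₂, hv₂, rfl⟩ := mem_image.1 h₂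
    simp only [monoStarts, mem_filter, mem_univ, true_and] at hv₀ hv₁ hv₂
    have hST : S ⊆ {c v₀, c v₁, c v₂} := fun x hx => by
      obtain ⟨v, hv, rfl⟩ := mem_image.1 hx
      simp only [monoStarts, mem_filter, mem_univ, true_and] at hv
      exact heq.mem_of_flankedBy_cyclic hn hiso hv₀ hv₁ hv₂ h₀₁ h₀₂ h₁₂ hv
    rw [hM _ hST, sum_insert (by simp [h₀₁, h₀₂]), sum_pair h₁₂]
    rcases heq.flankedBy_cyclic hn hiso hv₀ hv₁ hv₂ h₀₁ h₀₂ h₁₂ with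
      ⟨P01, P12, P20⟩ | ⟨P02, P21, P10⟩
    · have := card_monoStartsOf_add_add_le hiso hsize h₀₁ h₀₂ h₁₂ P01 P12 P20
      omega
    · have := card_monoStartsOf_add_add_le hiso hsize h₀₂ h₀₁ h₁₂.symm P02 P21 P10
      omega

end noInterior

end cycle

theorem stmt14_general (t k : ℕ) (hn : 3 ≤ t * k) [NeZero (t * k)]
    (c : ZMod (t * k) → Fin t)
    (hsize : ∀ i : Fin t, ((Finset.univ : Finset (ZMod (t * k))).filter fun v => c v = i).card = k)
    (heq : Equilibrium (Usharp (cycleZMod (t * k))) c) :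
    2 * (t - 1) * k ≤ ∑ v, Usharp (cycleZMod (t * k)) c v := by
  have hM : #(monoStarts (t * k) c) ≤ k := by
    by_cases hInt : ∃ u, c (u - 1) = c u ∧ c (u + 1) = c u
    · obtain ⟨u, hu⟩ := hInt
      exact (card_monoStarts_le_of_interior hn heq hu).trans_eq (hsize (c u))
    · push Not at hInt
      exact heq.card_monoStarts_le_of_noInterior hn hInt hsize
  rw [sum_usharp_cycleZMod hn, mul_assoc, Nat.sub_one_mul]
  omega

theorem stmt14 (t k : ℕ) (ht : 3 ≤ t) (hn : 3 ≤ t * k) [NeZero (t * k)]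
    (c : ZMod (t * k) → Fin t)
    (hsize : ∀ i : Fin t, ((Finset.univ : Finset (ZMod (t * k))).filter fun v => c v = i).card = k)
    (heq : Equilibrium (Usharp (cycleZMod (t * k))) c) :
    2 * (t - 1) * k ≤ ∑ v, Usharp (cycleZMod (t * k)) c v :=
  stmt14_general t k hn c hsize heq
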